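/- arXiv:2502.02705 — 2 statements merged into one kernel-verified Lean document; each statement's English description precedes it below -/
import Mathlib

section
/- (Monotonicity of optimal H-step values under improvability) Suppose there exists for each state s an action a with E_{s'∼p(·|s,a)}[γ V_sim(s')] - V_sim(s) ≥ -r(s). Then for every H ≥ 1 and every state s, the optimal H-step value satisfies V_H^*(s) ≥ V_{H-1}^*(s), where V_H^*(s) = sup over H-step policies of E[γ^H V_sim(s_H) + ∑_{t=0}^{H-1} γ^t r(s_t) - V_sim(s₀) | s₀ = s] under transition kernel p. -/
/-!
With the one-step Bellman operator `T^σ V = r + γ E_σ V`, an `H`-step value is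
`T^{π 0} ⋯ T^{π (H-1)} V`, and improvability says `V ≤ T^f V` for a deterministic policy `f`.
Appending `f` as a last step to an `(H-1)`-step policy therefore replaces the terminal value `V`
by `T^f V ≥ V`; every `T^σ` is monotone, so the value does not decrease, and taking suprema
gives `V_{H-1}^* ≤ V_H^*`.
-/

open Finset

section MDP

variable {S A : Type} [Fintype S] [Fintype A] [DecidableEq S]

/-- `q` is a Markov transition kernel (pmf over next states for each state-action). -/
def IsKernel (q : S → A → S → ℝ) : Prop :=
  ∀ s a, (∀ s', 0 ≤ q s a s') ∧ (∑ s', q s a s') = 1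

/-- A time-dependent stochastic policy sequence. -/
def IsPolicySeq (π : ℕ → S → A → ℝ) : Prop :=
  ∀ t s, (∀ a, 0 ≤ π t s a) ∧ (∑ a, π t s a) = 1

/-- A stationary stochastic policy. -/
def IsStationaryPolicy (π : S → A → ℝ) : Prop :=
  ∀ s, (∀ a, 0 ≤ π s a) ∧ (∑ a, π s a) = 1

/-- H-step value `E[γ^H V(s_H) + ∑_{t<H} γ^t r(s_t)]` of a time-dependent policy under
kernel `q`, with terminal value `V`. -/
noncomputable def valH (q : S → A → S → ℝ) (r : S → ℝ) (γ : ℝ) (V : S → ℝ) :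
    ℕ → (ℕ → S → A → ℝ) → S → ℝ
  | 0, _, s => V s
  | H + 1, π, s =>
      r s + γ * ∑ a, π 0 s a * ∑ s', q s a s' * valH q r γ V H (fun t => π (t + 1)) s'

/-- Optimal H-step value: supremum over H-step (time-dependent stochastic) policies. -/
noncomputable def VHopt (q : S → A → S → ℝ) (r : S → ℝ) (γ : ℝ) (V : S → ℝ)
    (H : ℕ) (s : S) : ℝ :=
  sSup {x | ∃ π, IsPolicySeq π ∧ valH q r γ V H π s = x}

/-- One step of the state-distribution dynamics induced by kernel `q` and stationary
policy `π`. -/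
noncomputable def pushforward (q : S → A → S → ℝ) (π : S → A → ℝ) (μ : S → ℝ) : S → ℝ :=
  fun s' => ∑ s, μ s * ∑ a, π s a * q s a s'

/-- Distribution of the state at time `t` of the Markov chain induced by `π` from `s₀`. -/
noncomputable def stateDist (q : S → A → S → ℝ) (π : S → A → ℝ) (s0 : S) (t : ℕ) :
    S → ℝ :=
  (pushforward q π)^[t] (fun s => if s = s0 then 1 else 0)

/-- Infinite-horizon discounted value of stationary policy `π` from `s₀`. -/
noncomputable def Vinf (q : S → A → S → ℝ) (r : S → ℝ) (γ : ℝ) (π : S → A → ℝ)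
    (s0 : S) : ℝ :=
  ∑' t : ℕ, γ ^ t * ∑ s, stateDist q π s0 t s * r s

/-- Optimal infinite-horizon discounted value. -/
noncomputable def Vstar (q : S → A → S → ℝ) (r : S → ℝ) (γ : ℝ) (s0 : S) : ℝ :=
  sSup {x | ∃ π, IsStationaryPolicy π ∧ Vinf q r γ π s0 = x}

end MDP

section Backup

variable {S A : Type} [Fintype S] [Fintype A]

/-- The Bellman operator `T^σ`. -/
noncomputable def policyBackup (q : S → A → S → ℝ) (r : S → ℝ) (γ : ℝ) (σ : S → A → ℝ)
    (V : S → ℝ) (s : S) : ℝ :=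
  r s + γ * ∑ a, σ s a * ∑ s', q s a s' * V s'

variable {q : S → A → S → ℝ} {r : S → ℝ} {γ : ℝ}

theorem valH_succ (V : S → ℝ) (H : ℕ) (π : ℕ → S → A → ℝ) :
    valH q r γ V (H + 1) π = policyBackup q r γ (π 0) (valH q r γ V H fun t => π (t + 1)) :=
  rfl

/-- Peeling off the last step instead of the first. -/
theorem valH_succ_eq_valH_policyBackup (V : S → ℝ) (H : ℕ) (π : ℕ → S → A → ℝ) :
    valH q r γ V (H + 1) π = valH q r γ (policyBackup q r γ (π H) V) H π := by
  induction H generalizing π with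
  | zero => rfl
  | succ H ih => rw [valH_succ, ih, ← valH_succ]

theorem valH_congr_policy {π π' : ℕ → S → A → ℝ} (V : S → ℝ) (H : ℕ)
    (h : ∀ t < H, π t = π' t) : valH q r γ V H π = valH q r γ V H π' := by
  induction H generalizing π π' with
  | zero => rfl
  | succ H ih =>
    rw [valH_succ, valH_succ, h 0 H.succ_pos, ih fun t ht => h (t + 1) (by omega)]

theorem policyBackup_mono (hq : IsKernel q) (hγ : 0 ≤ γ) {σ : S → A → ℝ}
    (hσ : IsStationaryPolicy σ) {V W : S → ℝ} (hVW : V ≤ W) :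
    policyBackup q r γ σ V ≤ policyBackup q r γ σ W := by
  intro s
  unfold policyBackup
  gcongr with a _ s' _
  · exact (hσ s).1 a
  · exact (hq s a).1 s'
  · exact hVW s'

theorem policyBackup_const (hq : IsKernel q) {σ : S → A → ℝ} (hσ : IsStationaryPolicy σ)
    (c : ℝ) (s : S) : policyBackup q r γ σ (fun _ => c) s = r s + γ * c := by
  simp only [policyBackup, ← Finset.sum_mul, (hq s _).2, one_mul, (hσ s).2]

theorem valH_mono_terminal (hq : IsKernel q) (hγ : 0 ≤ γ) {π : ℕ → S → A → ℝ}
    (hπ : IsPolicySeq π) {V W : S → ℝ} (hVW : V ≤ W) (H : ℕ) :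
    valH q r γ V H π ≤ valH q r γ W H π := by
  induction H generalizing π with
  | zero => exact hVW
  | succ H ih =>
    rw [valH_succ, valH_succ]
    exact policyBackup_mono hq hγ (hπ 0) (ih fun t => hπ (t + 1))

theorem exists_forall_valH_le (hq : IsKernel q) (hγ : 0 ≤ γ) (V : S → ℝ) (H : ℕ) :
    ∃ C, ∀ π, IsPolicySeq π → ∀ s, valH q r γ V H π s ≤ C := by
  obtain ⟨R, hR⟩ := (Set.finite_range r).bddAbove
  induction H with
  | zero =>
    obtain ⟨C, hC⟩ := (Set.finite_range V).bddAbove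
    exact ⟨C, fun _ _ s => hC ⟨s, rfl⟩⟩
  | succ H ih =>
    obtain ⟨C, hC⟩ := ih
    refine ⟨R + γ * C, fun π hπ s => ?_⟩
    calc valH q r γ V (H + 1) π s
        ≤ policyBackup q r γ (π 0) (fun _ => C) s :=
          policyBackup_mono hq hγ (hπ 0) (hC _ fun t => hπ (t + 1)) s
      _ = r s + γ * C := policyBackup_const hq (hπ 0) C s
      _ ≤ R + γ * C := by gcongr; exact hR ⟨s, rfl⟩

end Backup

section Extension

variable {S A : Type} [Fintype A] [DecidableEq A]

noncomputable def detPolicy (f : S → A) : S → A → ℝ :=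
  fun s => Pi.single (f s) 1

theorem isStationaryPolicy_detPolicy (f : S → A) : IsStationaryPolicy (detPolicy f) := by
  intro s
  refine ⟨fun a => ?_, by simp [detPolicy]⟩
  by_cases h : a = f s <;> simp [detPolicy, h]

theorem policyBackup_detPolicy [Fintype S] (q : S → A → S → ℝ) (r : S → ℝ) (γ : ℝ)
    (f : S → A) (V : S → ℝ) (s : S) :
    policyBackup q r γ (detPolicy f) V s = r s + γ * ∑ s', q s (f s) s' * V s' := by
  simp [policyBackup, detPolicy, Pi.single_apply]

noncomputable def extendPolicy (π : ℕ → S → A → ℝ) (H : ℕ) (f : S → A) : ℕ → S → A → ℝ :=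
  fun t => if t < H then π t else detPolicy f

theorem IsPolicySeq.extendPolicy {π : ℕ → S → A → ℝ} (hπ : IsPolicySeq π) (H : ℕ)
    (f : S → A) : IsPolicySeq (extendPolicy π H f) := by
  intro t
  unfold _root_.extendPolicy
  split_ifs
  · exact hπ t
  · exact isStationaryPolicy_detPolicy f

variable [Fintype S] {q : S → A → S → ℝ} {r : S → ℝ} {γ : ℝ}

theorem valH_le_valH_extendPolicy (hq : IsKernel q) (hγ : 0 ≤ γ) {V : S → ℝ} {f : S → A}
    (hf : V ≤ policyBackup q r γ (detPolicy f) V) {π : ℕ → S → A → ℝ} (hπ : IsPolicySeq π)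
    (H : ℕ) : valH q r γ V H π ≤ valH q r γ V (H + 1) (extendPolicy π H f) := by
  have hlast : extendPolicy π H f H = detPolicy f := by simp [extendPolicy]
  have hprefix : ∀ t < H, extendPolicy π H f t = π t := fun t ht => by simp [extendPolicy, ht]
  rw [valH_succ_eq_valH_policyBackup, hlast, valH_congr_policy _ H hprefix]
  exact valH_mono_terminal hq hγ hπ hf H

theorem VHopt_le_VHopt_succ (hq : IsKernel q) (hγ : 0 ≤ γ) {V : S → ℝ} {f : S → A}
    (hf : V ≤ policyBackup q r γ (detPolicy f) V) (H : ℕ) (s : S) :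
    VHopt q r γ V H s ≤ VHopt q r γ V (H + 1) s := by
  have hbdd : BddAbove {x | ∃ π, IsPolicySeq π ∧ valH q r γ V (H + 1) π s = x} := by
    obtain ⟨C, hC⟩ := exists_forall_valH_le hq hγ V (H + 1)
    exact ⟨C, fun _ ⟨π, hπ, hx⟩ => hx ▸ hC π hπ s⟩
  refine csSup_le ⟨_, fun _ => detPolicy f, fun _ => isStationaryPolicy_detPolicy f, rfl⟩ ?_
  rintro _ ⟨π, hπ, rfl⟩
  exact (valH_le_valH_extendPolicy hq hγ hf hπ H s).trans
    (le_csSup hbdd ⟨_, hπ.extendPolicy H f, rfl⟩)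

end Extension

theorem stmt_6_general {S A : Type} [Fintype S] [Fintype A]
    (p : S → A → S → ℝ) (hp : IsKernel p)
    (r Vsim : S → ℝ) (γ : ℝ) (hγ0 : 0 ≤ γ)
    (himp : ∀ s, ∃ a, (∑ s', p s a s' * (γ * Vsim s')) - Vsim s ≥ -(r s)) :
    ∀ H : ℕ, 1 ≤ H → ∀ s : S,
      VHopt p r γ Vsim H s - Vsim s ≥ VHopt p r γ Vsim (H - 1) s - Vsim s := by
  classical
  intro H hH s
  obtain ⟨H, rfl⟩ := Nat.exists_eq_add_of_le' hH
  choose f hf using himp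
  have hV : Vsim ≤ policyBackup p r γ (detPolicy f) Vsim := fun s => by
    rw [policyBackup_detPolicy]
    simp only [mul_left_comm _ γ, ← Finset.mul_sum] at hf
    linarith [hf s]
  simpa using VHopt_le_VHopt_succ hp hγ0 hV H s

/-- Monotonicity of optimal H-step values under improvability: if `V_sim`
is improvable with respect to the MDP with kernel `p`, then the optimal H-step reshaped
values `V_H^*(s) = VHopt p r γ V_sim H s - V_sim s` are monotone: `V_H^* ≥ V_{H-1}^*`. -/
theorem stmt_6 {S A : Type} [Fintype S] [Fintype A] [DecidableEq S]
    [Nonempty S] [Nonempty A]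
    (p : S → A → S → ℝ) (hp : IsKernel p)
    (r Vsim : S → ℝ) (γ : ℝ) (hγ0 : 0 ≤ γ) (hγ1 : γ < 1)
    (himp : ∀ s, ∃ a, (∑ s', p s a s' * (γ * Vsim s')) - Vsim s ≥ -(r s)) :
    ∀ H : ℕ, 1 ≤ H → ∀ s : S,
      VHopt p r γ Vsim H s - Vsim s ≥ VHopt p r γ Vsim (H - 1) s - Vsim s :=
  stmt_6_general p hp r Vsim γ hγ0 himp
end

section
/- (One-step improvement bound) If a stationary policy π satisfies, for all s, the one-step relation E_{a∼π(·|s), s'∼p(·|s,a)}[r̄(s,s')] ≥ Q_H^*(s,π) - γ E_{s'}[Q_H^*(s',π)] - γδ (where r̄(s,s') = r(s) + γ V_sim(s') - V_sim(s)), then the infinite-horizon value of π satisfies V^π(s₀) ≥ Q_H^*(s₀,π) + V_sim(s₀) - γδ/(1-γ) for every initial state s₀. -/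
open Finset

/-! Write `F = Q + V_sim`. Since the one-step expectation of `r̄` is `r - V_sim + γ · P V_sim`,
where `P` is the transition operator of the chain, the hypothesis says exactly that
`F - γ · P F - γδ ≤ r` pointwise. Averaging over the law `μₜ` of the state at time `t` gives
`Fₜ - γ Fₜ₊₁ - γδ ≤ Rₜ` for the expected values `Fₜ = μₜ F`, `Rₜ = μₜ r`; multiplying by `γᵗ`
and summing, the `F`-terms telescope to `F₀ = F(s₀)` and the error terms add up to
`γδ / (1 - γ)`. -/

lemma summable_pow_mul_of_abs_le {γ C : ℝ} (hγ0 : 0 ≤ γ) (hγ1 : γ < 1) {x : ℕ → ℝ}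
    (hx : ∀ t, |x t| ≤ C) : Summable fun t => γ ^ t * x t := by
  refine ((summable_geometric_of_lt_one hγ0 hγ1).mul_right C).of_norm_bounded fun t => ?_
  rw [Real.norm_eq_abs, abs_mul, abs_pow, abs_of_nonneg hγ0]
  exact mul_le_mul_of_nonneg_left (hx t) (pow_nonneg hγ0 t)

lemma sub_div_le_tsum_pow_mul {γ c CR CF : ℝ} (hγ0 : 0 ≤ γ) (hγ1 : γ < 1) {R F : ℕ → ℝ}
    (hR : ∀ t, |R t| ≤ CR) (hF : ∀ t, |F t| ≤ CF)
    (h : ∀ t, F t - γ * F (t + 1) - c ≤ R t) :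
    F 0 - c / (1 - γ) ≤ ∑' t, γ ^ t * R t := by
  have hsF := summable_pow_mul_of_abs_le hγ0 hγ1 hF
  have hsF' := summable_pow_mul_of_abs_le hγ0 hγ1 fun t => hF (t + 1)
  have hsR := summable_pow_mul_of_abs_le hγ0 hγ1 hR
  have hgeom := summable_geometric_of_lt_one hγ0 hγ1
  have htelescope : ∑' t, γ ^ t * F t = F 0 + γ * ∑' t, γ ^ t * F (t + 1) := by
    rw [hsF.tsum_eq_zero_add, ← tsum_mul_left]
    simp only [pow_zero, one_mul, pow_succ, mul_assoc, mul_left_comm γ]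
  calc F 0 - c / (1 - γ)
      = ∑' t, γ ^ t * F t - γ * ∑' t, γ ^ t * F (t + 1) - c * ∑' t, γ ^ t := by
        rw [htelescope, tsum_geometric_of_lt_one hγ0 hγ1]; ring
    _ = ∑' t, (γ ^ t * F t - γ * (γ ^ t * F (t + 1)) - c * γ ^ t) := by
        rw [(hsF.sub (hsF'.mul_left γ)).tsum_sub (hgeom.mul_left c),
          hsF.tsum_sub (hsF'.mul_left γ), tsum_mul_left, tsum_mul_left]
    _ ≤ ∑' t, γ ^ t * R t := by
        refine ((hsF.sub (hsF'.mul_left γ)).sub (hgeom.mul_left c)).tsum_le_tsum (fun t => ?_) hsR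
        linarith [mul_le_mul_of_nonneg_left (h t) (pow_nonneg hγ0 t)]

section MarkovChain

variable {S A : Type} [Fintype S] [Fintype A]

/-- The transition operator `(P g)(s) = E_{a ∼ π(·|s), s' ∼ q(·|s,a)} [g s']` of the chain. -/
noncomputable def markovStep (q : S → A → S → ℝ) (π : S → A → ℝ) (g : S → ℝ) (s : S) : ℝ :=
  ∑ a, π s a * ∑ s', q s a s' * g s'

lemma markovStep_add (q : S → A → S → ℝ) (π : S → A → ℝ) (f g : S → ℝ) (s : S) :
    markovStep q π (fun s' => f s' + g s') s = markovStep q π f s + markovStep q π g s := by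
  simp only [markovStep, mul_add, sum_add_distrib]

lemma sum_mul_const_add_of_sum_eq_one {ι : Type*} [Fintype ι] {w : ι → ℝ} (hw : ∑ i, w i = 1)
    (c : ℝ) (f : ι → ℝ) : ∑ i, w i * (c + f i) = c + ∑ i, w i * f i := by
  simp only [mul_add, sum_add_distrib, ← sum_mul, hw, one_mul]

lemma markovStep_const_add {q : S → A → S → ℝ} (hq : IsKernel q)
    {π : S → A → ℝ} (hπ : IsStationaryPolicy π) (c k : ℝ) (g : S → ℝ) (s : S) :
    markovStep q π (fun s' => c + k * g s') s = c + k * markovStep q π g s := by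
  simp only [markovStep, sum_mul_const_add_of_sum_eq_one (hq s _).2, mul_left_comm _ k, ← mul_sum]
  rw [sum_mul_const_add_of_sum_eq_one (hπ s).2]
  simp only [mul_left_comm _ k, ← mul_sum]

lemma sum_pushforward_mul (q : S → A → S → ℝ) (π : S → A → ℝ) (μ g : S → ℝ) :
    ∑ s', pushforward q π μ s' * g s' = ∑ s, μ s * markovStep q π g s := by
  simp only [pushforward, markovStep, sum_mul, mul_sum]
  rw [sum_comm]
  refine sum_congr rfl fun s _ => ?_
  rw [sum_comm]
  exact sum_congr rfl fun a _ => sum_congr rfl fun s' _ => by ring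

lemma abs_sum_mul_le_sum_abs {ι : Type*} [Fintype ι] {w : ι → ℝ} (hw0 : ∀ i, 0 ≤ w i)
    (hw1 : ∑ i, w i = 1) (g : ι → ℝ) : |∑ i, w i * g i| ≤ ∑ i, |g i| := by
  refine (abs_sum_le_sum_abs _ _).trans (sum_le_sum fun i _ => ?_)
  have hwi : w i ≤ 1 := hw1 ▸ single_le_sum (fun j _ => hw0 j) (mem_univ i)
  rw [abs_mul, abs_of_nonneg (hw0 i)]
  exact mul_le_of_le_one_left (abs_nonneg _) hwi

variable [DecidableEq S] {q : S → A → S → ℝ} {π : S → A → ℝ}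

lemma stateDist_succ (s0 : S) (t : ℕ) :
    stateDist q π s0 (t + 1) = pushforward q π (stateDist q π s0 t) :=
  Function.iterate_succ_apply' _ _ _

lemma sum_stateDist_succ_mul (s0 : S) (t : ℕ) (g : S → ℝ) :
    ∑ s, stateDist q π s0 (t + 1) s * g s = ∑ s, stateDist q π s0 t s * markovStep q π g s := by
  rw [stateDist_succ, sum_pushforward_mul]

lemma stateDist_nonneg (hq : IsKernel q) (hπ : IsStationaryPolicy π) (s0 : S) (t : ℕ) (s : S) :
    0 ≤ stateDist q π s0 t s := by
  induction t generalizing s with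
  | zero => simp only [stateDist, Function.iterate_zero, id]; positivity
  | succ t ih =>
    rw [stateDist_succ]
    exact sum_nonneg fun x _ => mul_nonneg (ih x) <|
      sum_nonneg fun a _ => mul_nonneg ((hπ x).1 a) ((hq x a).1 s)

lemma sum_stateDist (hq : IsKernel q) (hπ : IsStationaryPolicy π) (s0 : S) (t : ℕ) :
    ∑ s, stateDist q π s0 t s = 1 := by
  induction t with
  | zero => simp [stateDist]
  | succ t ih =>
    have hone : ∀ s, markovStep q π (fun _ => 1) s = 1 := fun s => by
      simp [markovStep, fun s a => (hq s a).2, fun s => (hπ s).2]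
    simpa [hone, ih] using sum_stateDist_succ_mul (q := q) (π := π) s0 t fun _ => 1

theorem sub_div_le_Vinf_of_le (hq : IsKernel q) (hπ : IsStationaryPolicy π) {γ : ℝ}
    (hγ0 : 0 ≤ γ) (hγ1 : γ < 1) {r F : S → ℝ} {c : ℝ}
    (h : ∀ s, F s - γ * markovStep q π F s - c ≤ r s) (s0 : S) :
    F s0 - c / (1 - γ) ≤ Vinf q r γ π s0 := by
  set μ := stateDist q π s0
  have hdrift : ∀ t, (∑ s, μ t s * F s) - γ * (∑ s, μ (t + 1) s * F s) - c
      ≤ ∑ s, μ t s * r s := fun t => by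
    calc (∑ s, μ t s * F s) - γ * (∑ s, μ (t + 1) s * F s) - c
        = ∑ s, μ t s * (F s - γ * markovStep q π F s - c) := by
          simp only [μ, sum_stateDist_succ_mul, mul_sub, sum_sub_distrib, ← sum_mul,
            sum_stateDist hq hπ, mul_sum, mul_left_comm γ]
          ring
      _ ≤ ∑ s, μ t s * r s :=
          sum_le_sum fun s _ => mul_le_mul_of_nonneg_left (h s) (stateDist_nonneg hq hπ s0 t s)
  have hbound : ∀ (g : S → ℝ) t, |∑ s, μ t s * g s| ≤ ∑ s, |g s| := fun g t =>
    abs_sum_mul_le_sum_abs (stateDist_nonneg hq hπ s0 t) (sum_stateDist hq hπ s0 t) g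
  have hstart : ∑ s, μ 0 s * F s = F s0 := by simp [μ, stateDist]
  simpa only [hstart, Vinf] using sub_div_le_tsum_pow_mul hγ0 hγ1 (hbound r) (hbound F) hdrift

end MarkovChain

theorem stmt_9_general {S A : Type} [Fintype S] [Fintype A] [DecidableEq S]
    (p : S → A → S → ℝ) (hp : IsKernel p)
    (r Vsim : S → ℝ) (γ : ℝ) (hγ0 : 0 ≤ γ) (hγ1 : γ < 1)
    (π : S → A → ℝ) (hπ : IsStationaryPolicy π) (δ : ℝ)
    (Q : S → ℝ)
    (hstep : ∀ s : S,
      (∑ a, π s a * ∑ s', p s a s' * (r s + γ * Vsim s' - Vsim s))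
        ≥ Q s - γ * (∑ a, π s a * ∑ s', p s a s' * Q s') - γ * δ) :
    ∀ s0 : S, Vinf p r γ π s0 ≥ Q s0 + Vsim s0 - γ * δ / (1 - γ) := by
  refine sub_div_le_Vinf_of_le hp hπ hγ0 hγ1 fun s => ?_
  have hreward : ∑ a, π s a * ∑ s', p s a s' * (r s + γ * Vsim s' - Vsim s)
      = r s - Vsim s + γ * markovStep p π Vsim s := by
    rw [← markovStep_const_add hp hπ]
    exact sum_congr rfl fun a _ => congrArg _ <| sum_congr rfl fun s' _ => by ring
  have hQ := hstep s
  rw [hreward] at hQ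
  rw [markovStep_add]
  simp only [markovStep] at hQ ⊢
  linarith

/-- One-step improvement bound: if the stationary policy `π` satisfies the
pointwise one-step relation
`E[r̄(s,s')] ≥ Q(s) - γ E[Q(s')] - γδ` (with `r̄(s,s') = r(s) + γ V_sim(s') - V_sim(s)`
and expectations over `a ∼ π(·|s)`, `s' ∼ p(·|s,a)`), then
`V^π(s₀) ≥ Q(s₀) + V_sim(s₀) - γδ/(1-γ)` for every initial state `s₀`. -/
theorem stmt_9 {S A : Type} [Fintype S] [Fintype A] [DecidableEq S]
    [Nonempty S] [Nonempty A]
    (p : S → A → S → ℝ) (hp : IsKernel p)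
    (r Vsim : S → ℝ) (γ : ℝ) (hγ0 : 0 ≤ γ) (hγ1 : γ < 1)
    (π : S → A → ℝ) (hπ : IsStationaryPolicy π) (δ : ℝ) (hδ : 0 ≤ δ)
    (Q : S → ℝ)
    (hstep : ∀ s : S,
      (∑ a, π s a * ∑ s', p s a s' * (r s + γ * Vsim s' - Vsim s))
        ≥ Q s - γ * (∑ a, π s a * ∑ s', p s a s' * Q s') - γ * δ) :
    ∀ s0 : S, Vinf p r γ π s0 ≥ Q s0 + Vsim s0 - γ * δ / (1 - γ) :=
  stmt_9_general p hp r Vsim γ hγ0 hγ1 π hπ δ Q hstep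
end
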